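/- Let A be a real symmetric positive definite n×n matrix. For i = 1,…,N let Rᵢ be an nᵢ×n real matrix, Dᵢ an nᵢ×nᵢ real diagonal matrix, and Bᵢ a real symmetric positive definite nᵢ×nᵢ matrix. Assume: (i) there is a coloring col : {1,…,N} → {1,…,N_c} such that col(k) = col(l) with k ≠ l implies R_l A R_kᵀ = 0; (ii) γ₁ > 0 satisfies (Rᵢᵀ Dᵢ Uᵢ)ᵀ A (Rᵢᵀ Dᵢ Uᵢ) ≤ γ₁ · (Uᵢᵀ Bᵢ Uᵢ) for every i and every Uᵢ ∈ ℝ^{nᵢ}; (iii) the assembly map (U₁,…,U_N) ↦ ∑_{i=1}^N Rᵢᵀ Dᵢ Uᵢ is surjective onto ℝⁿ. Then every eigenvalue of M_SORAS⁻¹ A is at most N_c · γ₁, where M_SORAS⁻¹ := ∑_{i=1}^N Rᵢᵀ Dᵢ Bᵢ⁻¹ Dᵢ Rᵢ. -/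

import Mathlib

open Matrix Finset

section helpers
variable {ι : Type*} {α : Type*} {β : Type*} [Fintype α] [Fintype β]

lemma my_dp_sum (t : Finset ι) (v : α → ℝ) (s : ι → α → ℝ) :
    v ⬝ᵥ (∑ i ∈ t, s i) = ∑ i ∈ t, v ⬝ᵥ s i := by
  simp only [dotProduct, Finset.sum_apply, Finset.mul_sum]
  exact Finset.sum_comm

lemma my_sum_dp (t : Finset ι) (v : α → ℝ) (s : ι → α → ℝ) :
    (∑ i ∈ t, s i) ⬝ᵥ v = ∑ i ∈ t, s i ⬝ᵥ v := by
  simp only [dotProduct, Finset.sum_apply, Finset.sum_mul]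
  exact Finset.sum_comm

lemma my_mulVec_sum (t : Finset ι) (A : Matrix β α ℝ) (s : ι → α → ℝ) :
    A *ᵥ (∑ i ∈ t, s i) = ∑ i ∈ t, A *ᵥ s i := by
  funext j
  simp only [mulVec, dotProduct, Finset.sum_apply, Finset.mul_sum]
  exact Finset.sum_comm

lemma my_sum_mulVec (t : Finset ι) (M : ι → Matrix β α ℝ) (x : α → ℝ) :
    (∑ i ∈ t, M i) *ᵥ x = ∑ i ∈ t, M i *ᵥ x := by
  funext j
  simp only [mulVec, dotProduct, Finset.sum_apply, Matrix.sum_apply, Finset.sum_mul]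
  exact Finset.sum_comm

lemma my_dp_trans (P : Matrix α β ℝ) (x : α → ℝ) (y : β → ℝ) :
    x ⬝ᵥ (P *ᵥ y) = (Pᵀ *ᵥ x) ⬝ᵥ y := by
  rw [dotProduct_mulVec, mulVec_transpose]

lemma my_mulVec_dp (Q : Matrix α β ℝ) (u : β → ℝ) (s : α → ℝ) :
    (Q *ᵥ u) ⬝ᵥ s = u ⬝ᵥ (Qᵀ *ᵥ s) := by
  rw [my_dp_trans, transpose_transpose, dotProduct_comm]

lemma my_dp_symm {A : Matrix α α ℝ} (hA : Aᵀ = A) (x y : α → ℝ) :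
    y ⬝ᵥ A *ᵥ x = x ⬝ᵥ A *ᵥ y := by
  rw [my_dp_trans, hA, dotProduct_comm]

lemma my_map_re {m : ℕ} (S : Matrix (Fin m) (Fin m) ℝ) (v : Fin m → ℂ) (j : Fin m) :
    ((S.map Complex.ofReal *ᵥ v) j).re = (S *ᵥ (fun k => (v k).re)) j := by
  simp [mulVec, dotProduct, Complex.re_sum]

lemma my_map_im {m : ℕ} (S : Matrix (Fin m) (Fin m) ℝ) (v : Fin m → ℂ) (j : Fin m) :
    ((S.map Complex.ofReal *ᵥ v) j).im = (S *ᵥ (fun k => (v k).im)) j := by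
  simp [mulVec, dotProduct, Complex.im_sum]
end helpers

section cs
lemma my_cs_sum {m k : ℕ} {A : Matrix (Fin m) (Fin m) ℝ} (hA : A.PosSemidef)
    (s : Fin k → Fin m → ℝ) :
    (∑ c, s c) ⬝ᵥ A *ᵥ (∑ c, s c) ≤ (k : ℝ) * ∑ c, s c ⬝ᵥ A *ᵥ s c := by
  have hAt : Aᵀ = A := hA.1
  have pair : ∀ x y : Fin m → ℝ,
      x ⬝ᵥ A *ᵥ y ≤ (x ⬝ᵥ A *ᵥ x + y ⬝ᵥ A *ᵥ y) / 2 := by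
    intro x y
    have h0 : (0:ℝ) ≤ (x - y) ⬝ᵥ A *ᵥ (x - y) := by
      have := hA.dotProduct_mulVec_nonneg (x - y); rwa [star_trivial] at this
    have hexp : (x - y) ⬝ᵥ A *ᵥ (x - y)
        = x ⬝ᵥ A *ᵥ x - x ⬝ᵥ A *ᵥ y - y ⬝ᵥ A *ᵥ x + y ⬝ᵥ A *ᵥ y := by
      rw [mulVec_sub, sub_dotProduct, dotProduct_sub, dotProduct_sub]; ring
    have hsym : y ⬝ᵥ A *ᵥ x = x ⬝ᵥ A *ᵥ y := my_dp_symm hAt x y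
    rw [hexp, hsym] at h0
    linarith
  calc (∑ c, s c) ⬝ᵥ A *ᵥ (∑ c, s c)
      = ∑ c, ∑ d, s c ⬝ᵥ A *ᵥ s d := by
        rw [my_mulVec_sum, my_sum_dp]
        exact Finset.sum_congr rfl fun c _ => my_dp_sum ..
    _ ≤ ∑ c, ∑ d, (s c ⬝ᵥ A *ᵥ s c + s d ⬝ᵥ A *ᵥ s d) / 2 :=
        Finset.sum_le_sum fun c _ => Finset.sum_le_sum fun d _ => pair (s c) (s d)
    _ = (k : ℝ) * ∑ c, s c ⬝ᵥ A *ᵥ s c := by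
        have step : ∀ c : Fin k, ∑ d : Fin k, (s c ⬝ᵥ A *ᵥ s c + s d ⬝ᵥ A *ᵥ s d) / 2
            = ((k : ℝ) * (s c ⬝ᵥ A *ᵥ s c) + ∑ d, s d ⬝ᵥ A *ᵥ s d) / 2 := by
          intro c
          rw [← Finset.sum_div]
          congr 1
          rw [Finset.sum_add_distrib, Finset.sum_const, Finset.card_univ,
            Fintype.card_fin, nsmul_eq_mul]
        rw [Finset.sum_congr rfl (fun c _ => step c), ← Finset.sum_div,
          Finset.sum_add_distrib, ← Finset.mul_sum, Finset.sum_const, Finset.card_univ,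
          Fintype.card_fin, nsmul_eq_mul]
        ring
end cs

/-- **SORAS upper spectral bound.**
Under a coloring with `Nc` colors, the local continuity estimates with constant `γ₁`,
and surjectivity of the weighted assembly map, every eigenvalue of `M_SORAS⁻¹ A` is
(real and) at most `Nc · γ₁`, where `M_SORAS⁻¹ = ∑ᵢ Rᵢᵀ Dᵢ Bᵢ⁻¹ Dᵢ Rᵢ`. -/
theorem soras_upper_bound {n N Nc : ℕ}
    (A : Matrix (Fin n) (Fin n) ℝ) (hA : A.PosDef)
    (ni : Fin N → ℕ)
    (R : (i : Fin N) → Matrix (Fin (ni i)) (Fin n) ℝ)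
    (D : (i : Fin N) → Matrix (Fin (ni i)) (Fin (ni i)) ℝ)
    (hD : ∀ i, (D i).IsDiag)
    (B : (i : Fin N) → Matrix (Fin (ni i)) (Fin (ni i)) ℝ)
    (hB : ∀ i, (B i).PosDef)
    (col : Fin N → Fin Nc)
    (hcol : ∀ k l, k ≠ l → col k = col l → R l * A * (R k)ᵀ = 0)
    (γ₁ : ℝ) (hγ₁ : 0 < γ₁)
    (hcont : ∀ i (U : Fin (ni i) → ℝ),
      (((R i)ᵀ * D i) *ᵥ U) ⬝ᵥ A *ᵥ (((R i)ᵀ * D i) *ᵥ U) ≤ γ₁ * (U ⬝ᵥ (B i) *ᵥ U))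
    (hsurj : Function.Surjective
      (fun U : (i : Fin N) → Fin (ni i) → ℝ => ∑ i, ((R i)ᵀ * D i) *ᵥ (U i)))
    (μ : ℂ) (v : Fin n → ℂ) (hv : v ≠ 0)
    (heig : ((∑ i, (R i)ᵀ * D i * (B i)⁻¹ * D i * R i) * A).map Complex.ofReal *ᵥ v
      = μ • v) :
    μ.im = 0 ∧ μ.re ≤ (Nc : ℝ) * γ₁ := by
  classical
  set M : Matrix (Fin n) (Fin n) ℝ := ∑ i, (R i)ᵀ * D i * (B i)⁻¹ * D i * R i with hMdef
  have hAt : Aᵀ = A := hA.1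
  have hDt : ∀ i, (D i)ᵀ = D i := by
    intro i
    ext x y
    by_cases h : x = y
    · subst h; rfl
    · rw [transpose_apply, hD i (Ne.symm h), hD i h]
  have hBinv : ∀ i, ((B i)⁻¹)ᵀ = (B i)⁻¹ := by
    intro i
    rw [transpose_nonsing_inv]
    congr 1
    exact (hB i).1
  have hMt : Mᵀ = M := by
    rw [hMdef, transpose_sum]
    refine Finset.sum_congr rfl fun i _ => ?_
    simp [transpose_mul, transpose_transpose, hDt i, hBinv i, Matrix.mul_assoc]
  -- key inequality
  have key : ∀ z : Fin n → ℝ,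
      (M *ᵥ z) ⬝ᵥ A *ᵥ (M *ᵥ z) ≤ (Nc : ℝ) * γ₁ * (z ⬝ᵥ M *ᵥ z) := by
    intro z
    set U : (i : Fin N) → Fin (ni i) → ℝ := fun i => (B i)⁻¹ *ᵥ (D i *ᵥ (R i *ᵥ z))
      with hUdef
    set w : Fin N → Fin n → ℝ := fun i => ((R i)ᵀ * D i) *ᵥ U i with hwdef
    have hterm : ∀ i, ((R i)ᵀ * D i * (B i)⁻¹ * D i * R i) *ᵥ z = w i := by
      intro i
      rw [hwdef, hUdef]
      simp only [← mulVec_mulVec]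
    have hMz : M *ᵥ z = ∑ i, w i := by
      rw [hMdef, my_sum_mulVec]
      exact Finset.sum_congr rfl fun i _ => hterm i
    have hzw : ∀ i, z ⬝ᵥ w i = U i ⬝ᵥ B i *ᵥ U i := by
      intro i
      have hBU : B i *ᵥ U i = D i *ᵥ (R i *ᵥ z) := by
        rw [hUdef]
        rw [mulVec_mulVec, mul_nonsing_inv _ (isUnit_iff_ne_zero.mpr (hB i).det_pos.ne'), one_mulVec]
      rw [hBU, hwdef]
      rw [my_dp_trans, transpose_mul, transpose_transpose, hDt i, dotProduct_comm,
        ← mulVec_mulVec]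
    have hwAw : ∀ k l : Fin N, k ≠ l → col k = col l → w k ⬝ᵥ A *ᵥ w l = 0 := by
      intro k l hkl hc
      have h0 : R k * A * (R l)ᵀ = 0 := hcol l k (Ne.symm hkl) hc.symm
      have hmat : ((R k)ᵀ * D k)ᵀ * (A * ((R l)ᵀ * D l)) = 0 := by
        rw [transpose_mul, transpose_transpose, hDt k]
        calc D k * R k * (A * ((R l)ᵀ * D l))
            = D k * (R k * A * (R l)ᵀ) * D l := by
              simp only [Matrix.mul_assoc]
          _ = 0 := by rw [h0]; simp
      rw [hwdef]
      rw [mulVec_mulVec, my_mulVec_dp, mulVec_mulVec, hmat, zero_mulVec, dotProduct_zero]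
    set S : Fin Nc → Fin n → ℝ :=
      fun c => ∑ i ∈ Finset.univ.filter (fun i => col i = c), w i with hSdef
    have hsplit : ∑ c, S c = ∑ i, w i := Finset.sum_fiberwise Finset.univ col w
    have hMzS : M *ᵥ z = ∑ c, S c := by rw [hMz, hsplit]
    have hdiag : ∀ c, S c ⬝ᵥ A *ᵥ S c
        = ∑ i ∈ Finset.univ.filter (fun i => col i = c), w i ⬝ᵥ A *ᵥ w i := by
      intro c
      rw [hSdef]
      calc (∑ i ∈ Finset.univ.filter (fun i => col i = c), w i) ⬝ᵥ A *ᵥ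
            (∑ i ∈ Finset.univ.filter (fun i => col i = c), w i)
          = ∑ i ∈ Finset.univ.filter (fun i => col i = c),
              ∑ j ∈ Finset.univ.filter (fun i => col i = c), w i ⬝ᵥ A *ᵥ w j := by
            rw [my_mulVec_sum, my_sum_dp]
            exact Finset.sum_congr rfl fun i _ => my_dp_sum ..
        _ = ∑ i ∈ Finset.univ.filter (fun i => col i = c), w i ⬝ᵥ A *ᵥ w i := by
            refine Finset.sum_congr rfl fun i hi => ?_
            refine Finset.sum_eq_single_of_mem i hi fun j hj hne => ?_
            have hci : col i = c := (Finset.mem_filter.mp hi).2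
            have hcj : col j = c := (Finset.mem_filter.mp hj).2
            exact hwAw i j (Ne.symm hne) (hci.trans hcj.symm)
    have h1 : (M *ᵥ z) ⬝ᵥ A *ᵥ (M *ᵥ z) ≤ (Nc : ℝ) * ∑ c, S c ⬝ᵥ A *ᵥ S c := by
      rw [hMzS]
      exact my_cs_sum hA.posSemidef S
    have h2 : ∑ c, S c ⬝ᵥ A *ᵥ S c = ∑ i, w i ⬝ᵥ A *ᵥ w i := by
      rw [Finset.sum_congr rfl fun c _ => hdiag c]
      exact Finset.sum_fiberwise Finset.univ col _
    have h3 : ∑ i, w i ⬝ᵥ A *ᵥ w i ≤ γ₁ * (z ⬝ᵥ M *ᵥ z) := by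
      have hle : ∑ i, w i ⬝ᵥ A *ᵥ w i ≤ ∑ i, γ₁ * (U i ⬝ᵥ B i *ᵥ U i) :=
        Finset.sum_le_sum fun i _ => hcont i (U i)
      have heq : ∑ i, γ₁ * (U i ⬝ᵥ B i *ᵥ U i) = γ₁ * (z ⬝ᵥ M *ᵥ z) := by
        rw [← Finset.mul_sum]
        congr 1
        rw [Finset.sum_congr rfl fun i _ => (hzw i).symm, ← my_dp_sum, ← hMz]
      linarith
    calc (M *ᵥ z) ⬝ᵥ A *ᵥ (M *ᵥ z)
        ≤ (Nc : ℝ) * ∑ c, S c ⬝ᵥ A *ᵥ S c := h1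
      _ = (Nc : ℝ) * ∑ i, w i ⬝ᵥ A *ᵥ w i := by rw [h2]
      _ ≤ (Nc : ℝ) * (γ₁ * (z ⬝ᵥ M *ᵥ z)) :=
          mul_le_mul_of_nonneg_left h3 (Nat.cast_nonneg Nc)
      _ = (Nc : ℝ) * γ₁ * (z ⬝ᵥ M *ᵥ z) := by ring
  -- real and imaginary parts of the eigenvector
  set a : Fin n → ℝ := fun k => (v k).re with hadef
  set b : Fin n → ℝ := fun k => (v k).im with hbdef
  have hre : (M * A) *ᵥ a = μ.re • a - μ.im • b := by
    funext j
    have h := congrArg Complex.re (congrFun heig j)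
    rw [my_map_re] at h
    rw [← hadef] at h
    simp only [Pi.smul_apply, smul_eq_mul, Complex.mul_re] at h
    simp only [Pi.sub_apply, Pi.smul_apply, smul_eq_mul]
    rw [h]
  have him : (M * A) *ᵥ b = μ.re • b + μ.im • a := by
    funext j
    have h := congrArg Complex.im (congrFun heig j)
    rw [my_map_im] at h
    rw [← hbdef] at h
    simp only [Pi.smul_apply, smul_eq_mul, Complex.mul_im] at h
    simp only [Pi.add_apply, Pi.smul_apply, smul_eq_mul]
    rw [h]
  have hq : 0 < a ⬝ᵥ A *ᵥ a + b ⬝ᵥ A *ᵥ b := by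
    have hab : a ≠ 0 ∨ b ≠ 0 := by
      by_contra hcon
      push_neg at hcon
      obtain ⟨ha0, hb0⟩ := hcon
      apply hv
      funext j
      have h1 : a j = 0 := by rw [ha0]; rfl
      have h2 : b j = 0 := by rw [hb0]; rfl
      exact Complex.ext (by simpa [hadef] using h1) (by simpa [hbdef] using h2)
    rcases hab with ha | hb
    · exact add_pos_of_pos_of_nonneg (by simpa using hA.dotProduct_mulVec_pos ha)
        (by simpa using hA.posSemidef.dotProduct_mulVec_nonneg b)
    · exact add_pos_of_nonneg_of_pos (by simpa using hA.posSemidef.dotProduct_mulVec_nonneg a)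
        (by simpa using hA.dotProduct_mulVec_pos hb)
  have hAMA : (A * M * A)ᵀ = A * M * A := by
    simp [transpose_mul, hAt, hMt, Matrix.mul_assoc]
  have hmv : ∀ x : Fin n → ℝ, (A * M * A) *ᵥ x = A *ᵥ ((M * A) *ᵥ x) := by
    intro x
    rw [mulVec_mulVec, Matrix.mul_assoc]
  have g_ab : a ⬝ᵥ (A * M * A) *ᵥ b = μ.re * (a ⬝ᵥ A *ᵥ b) + μ.im * (a ⬝ᵥ A *ᵥ a) := by
    rw [hmv, him, mulVec_add, mulVec_smul, mulVec_smul, dotProduct_add,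
      dotProduct_smul, dotProduct_smul, smul_eq_mul, smul_eq_mul]
  have g_ba : b ⬝ᵥ (A * M * A) *ᵥ a = μ.re * (b ⬝ᵥ A *ᵥ a) - μ.im * (b ⬝ᵥ A *ᵥ b) := by
    rw [hmv, hre, mulVec_sub, mulVec_smul, mulVec_smul, dotProduct_sub,
      dotProduct_smul, dotProduct_smul, smul_eq_mul, smul_eq_mul]
  have hsymAB : a ⬝ᵥ A *ᵥ b = b ⬝ᵥ A *ᵥ a := my_dp_symm hAt b a
  have hgsym : a ⬝ᵥ (A * M * A) *ᵥ b = b ⬝ᵥ (A * M * A) *ᵥ a := my_dp_symm hAMA b a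
  have him0 : μ.im = 0 := by
    have h5 : μ.im * (a ⬝ᵥ A *ᵥ a + b ⬝ᵥ A *ᵥ b) = 0 := by
      have h := hgsym
      rw [g_ab, g_ba, hsymAB] at h
      linear_combination h
    rcases mul_eq_zero.mp h5 with h | h
    · exact h
    · exact absurd h hq.ne'
  have hre2 : (M * A) *ᵥ a = μ.re • a := by rw [hre, him0]; simp
  have him2 : (M * A) *ᵥ b = μ.re • b := by rw [him, him0]; simp
  have bnd : ∀ x : Fin n → ℝ, (M * A) *ᵥ x = μ.re • x →
      μ.re ^ 2 * (x ⬝ᵥ A *ᵥ x) ≤ (Nc : ℝ) * γ₁ * (μ.re * (x ⬝ᵥ A *ᵥ x)) := by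
    intro x hx
    have hk := key (A *ᵥ x)
    have hMx : M *ᵥ (A *ᵥ x) = μ.re • x := by rw [mulVec_mulVec, hx]
    rw [hMx] at hk
    have e1 : (μ.re • x) ⬝ᵥ A *ᵥ (μ.re • x) = μ.re ^ 2 * (x ⬝ᵥ A *ᵥ x) := by
      rw [mulVec_smul, dotProduct_smul, smul_dotProduct, smul_eq_mul, smul_eq_mul]
      ring
    have e2 : (A *ᵥ x) ⬝ᵥ (μ.re • x) = μ.re * (x ⬝ᵥ A *ᵥ x) := by
      rw [dotProduct_smul, smul_eq_mul, dotProduct_comm]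
    rw [e1, e2] at hk
    exact hk
  have h6 := add_le_add (bnd a hre2) (bnd b him2)
  refine ⟨him0, ?_⟩
  have hc : 0 ≤ (Nc : ℝ) * γ₁ := mul_nonneg (Nat.cast_nonneg Nc) hγ₁.le
  by_cases hμ : μ.re ≤ 0
  · exact hμ.trans hc
  · push_neg at hμ
    nlinarith [mul_pos hμ hq, h6]
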